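/- arXiv:0902.1594 — 5 statements merged into one kernel-verified Lean document; each statement's English description precedes it below -/
import Mathlib

section
/- Let d_0, d_1, ..., d_{s+1} be s+2 real numbers and define r_i = ∏_{0 ≤ j < k ≤ s+1, j,k ≠ i} (d_k - d_j). Then for any polynomial p of degree at most s, ∑_{i=0}^{s+1} (-1)^i r_i p(d_i) = 0. -/
/-!
`r i` is the Vandermonde determinant of the points other than `d i`, so the alternating sum is
the Laplace expansion, along the first column, of the determinant of the matrix with rows
`(p (d i), 1, d i, …, d i ^ s)`. For a monomial `p = X ^ m` with `m ≤ s` that column repeats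
another one, and the sum is linear in `p`.
-/

open Finset Matrix Polynomial

section Vandermonde

variable {R : Type*} [CommRing R] {n : ℕ}

theorem det_vandermonde_eq_prod_filter_lt (v : Fin n → R) :
    (vandermonde v).det =
      ∏ q ∈ univ.filter (fun q : Fin n × Fin n => q.1 < q.2), (v q.2 - v q.1) := by
  rw [det_vandermonde]
  exact (prod_finset_product' _ _ _ fun q => by simp).symm

theorem prod_filter_lt_ne_eq_prod_filter_lt_succAbove {M : Type*} [CommMonoid M]
    (f : Fin (n + 1) → Fin (n + 1) → M) (i : Fin (n + 1)) :
    ∏ q ∈ univ.filter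
        (fun q : Fin (n + 1) × Fin (n + 1) => q.1 < q.2 ∧ q.1 ≠ i ∧ q.2 ≠ i),
        f q.1 q.2 =
      ∏ q ∈ univ.filter (fun q : Fin n × Fin n => q.1 < q.2),
        f (i.succAbove q.1) (i.succAbove q.2) := by
  symm
  refine prod_bij (fun q _ => (i.succAbove q.1, i.succAbove q.2)) ?_ ?_ ?_ fun _ _ => rfl
  · intro q hq
    simp only [mem_filter, mem_univ, true_and] at hq ⊢
    exact ⟨Fin.succAbove_lt_succAbove_iff.2 hq, Fin.succAbove_ne i q.1, Fin.succAbove_ne i q.2⟩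
  · intro a _ b _ h
    simp only [Prod.mk.injEq] at h
    exact Prod.ext (Fin.succAbove_right_injective h.1) (Fin.succAbove_right_injective h.2)
  · rintro ⟨j, k⟩ hq
    simp only [mem_filter, mem_univ, true_and] at hq
    obtain ⟨a, rfl⟩ := Fin.exists_succAbove_eq hq.2.1
    obtain ⟨b, rfl⟩ := Fin.exists_succAbove_eq hq.2.2
    exact ⟨(a, b), by simpa using Fin.succAbove_lt_succAbove_iff.1 hq.1, rfl⟩

theorem prod_filter_lt_ne_eq_det_vandermonde (d : Fin (n + 1) → R) (i : Fin (n + 1)) :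
    ∏ q ∈ univ.filter
        (fun q : Fin (n + 1) × Fin (n + 1) => q.1 < q.2 ∧ q.1 ≠ i ∧ q.2 ≠ i),
        (d q.2 - d q.1) =
      (vandermonde (d ∘ i.succAbove)).det := by
  rw [prod_filter_lt_ne_eq_prod_filter_lt_succAbove (fun a b => d b - d a),
    det_vandermonde_eq_prod_filter_lt]
  rfl

theorem det_cons_vandermonde (d v : Fin (n + 1) → R) :
    (of fun i => Fin.cons (v i) fun j : Fin n => d i ^ (j : ℕ)).det =
      ∑ i : Fin (n + 1), (-1) ^ (i : ℕ) * (vandermonde (d ∘ i.succAbove)).det * v i := by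
  rw [det_succ_column_zero]
  refine sum_congr rfl fun i _ => ?_
  rw [mul_right_comm]
  rfl

theorem sum_neg_one_pow_mul_det_vandermonde_mul_pow_eq_zero (d : Fin (n + 1) → R) {m : ℕ}
    (hm : m < n) :
    ∑ i : Fin (n + 1), (-1) ^ (i : ℕ) * (vandermonde (d ∘ i.succAbove)).det * d i ^ m =
      0 := by
  rw [← det_cons_vandermonde]
  exact det_zero_of_column_eq (Fin.succ_ne_zero ⟨m, hm⟩).symm fun _ => rfl

end Vandermonde

theorem Polynomial.sum_mul_eval_eq_zero {R ι : Type*} [CommSemiring R] {s : Finset ι}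
    {c x : ι → R} {n : ℕ} (h : ∀ m < n, ∑ i ∈ s, c i * x i ^ m = 0) {p : R[X]}
    (hp : p.natDegree < n) :
    ∑ i ∈ s, c i * p.eval (x i) = 0 := by
  simp_rw [eval_eq_sum_range' hp, mul_sum, mul_left_comm (c _)]
  rw [sum_comm]
  exact sum_eq_zero fun m hm => by rw [← mul_sum, h m (mem_range.1 hm), mul_zero]

/-- Interpolation lemma: for real numbers `d 0, …, d (s+1)` and
`r i = ∏_{0 ≤ j < k ≤ s+1, j,k ≠ i} (d k - d j)`, any polynomial `p` of degree at
most `s` satisfies `∑ i, (-1)^i * r i * p (d i) = 0`. -/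
theorem stmt_3 (s : ℕ) (d : Fin (s + 2) → ℝ) (p : Polynomial ℝ)
    (hp : p.degree ≤ (s : ℕ)) :
    ∑ i : Fin (s + 2),
        (-1 : ℝ) ^ (i : ℕ) *
          (∏ q ∈ Finset.univ.filter
              (fun q : Fin (s + 2) × Fin (s + 2) => q.1 < q.2 ∧ q.1 ≠ i ∧ q.2 ≠ i),
            (d q.2 - d q.1)) *
          p.eval (d i) = 0 := by
  simp_rw [prod_filter_lt_ne_eq_det_vandermonde]
  exact sum_mul_eval_eq_zero
    (fun _ hm => sum_neg_one_pow_mul_det_vandermonde_mul_pow_eq_zero d hm)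
    (Nat.lt_succ_of_le (natDegree_le_of_degree_le hp))
end

section
/- Fix real numbers d_1, ..., d_{s+1}, a real number d_0, and integers s ≥ 0, 0 ≤ ℓ ≤ s. Then ∑_{k=0}^{ℓ} (∏_{s-ℓ+1 ≤ j ≤ s-k} (d_j - d_0)) · (∏_{s-k+1 < j ≤ s+1} (d_j - d_{s-ℓ+1})) = ∏_{s-ℓ+1 < j ≤ s+1} (d_j - d_0), where empty products equal 1. -/
/-!
Put `x j = d j - d 0`, `y j = d j - d (s - ℓ + 1)` and `a = s - ℓ + 1`. Then `x j - y j = x a`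
for every `j`, so the identity is the telescoping expansion of `∏ (y j + x a)` over `(a, s + 1]`,
after reindexing the sum by `m = s - k + 1`.
-/

open Finset

theorem Finset.sum_prod_Ico_mul_prod_Ioc {ι R : Type*} [LinearOrder ι] [LocallyFiniteOrder ι]
    [CommSemiring R] {x y : ι → R} {a b : ι} (hab : a ≤ b)
    (hxy : ∀ j ∈ Ioc a b, x j = y j + x a) :
    ∑ m ∈ Icc a b, (∏ j ∈ Ico a m, x j) * ∏ j ∈ Ioc m b, y j = ∏ j ∈ Ioc a b, x j := by
  have hbelow : ∀ i ∈ Ioc a b, {j ∈ Ioc a b | j < i} = Ioo a i := by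
    intro i hi; ext j; simp only [mem_filter, mem_Ioc, mem_Ioo] at hi ⊢; grind
  have habove : ∀ i ∈ Ioc a b, {j ∈ Ioc a b | i < j} = Ioc i b := by
    intro i hi; ext j; simp only [mem_filter, mem_Ioc] at hi ⊢; grind
  rw [prod_congr rfl hxy, prod_add_ordered, ← Ioc_insert_left hab, sum_insert left_notMem_Ioc,
    Ico_self, prod_empty, one_mul]
  congr 1
  refine sum_congr rfl fun m hm => ?_
  have hIoo : Ioo a m ⊆ Ioc a b :=
    Ioo_subset_Ioc_self.trans (Ioc_subset_Ioc_right (mem_Ioc.1 hm).2)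
  rw [hbelow m hm, habove m hm, ← Ioo_insert_left (mem_Ioc.1 hm).1, prod_insert left_notMem_Ioo,
    prod_congr rfl fun j hj => hxy j (hIoo hj)]

theorem stmt_6_general (d : ℤ → ℝ) (s ℓ : ℤ) (hℓ0 : 0 ≤ ℓ) :
    ∑ k ∈ Finset.Icc 0 ℓ,
        (∏ j ∈ Finset.Icc (s - ℓ + 1) (s - k), (d j - d 0)) *
          (∏ j ∈ Finset.Icc (s - k + 2) (s + 1), (d j - d (s - ℓ + 1)))
      = ∏ j ∈ Finset.Icc (s - ℓ + 2) (s + 1), (d j - d 0) := by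
  have htelescope := sum_prod_Ico_mul_prod_Ioc (x := fun j => d j - d 0)
    (y := fun j => d j - d (s - ℓ + 1)) (a := s - ℓ + 1) (b := s + 1) (by omega)
    (fun j _ => by ring)
  rw [show s - ℓ + 2 = s - ℓ + 1 + 1 by ring, Icc_add_one_left_eq_Ioc, ← htelescope]
  refine sum_nbij' (fun k => s - k + 1) (fun m => s + 1 - m) ?_ ?_ ?_ ?_ fun k _ => ?_
  · intro k hk; simp only [mem_Icc] at hk ⊢; omega
  · intro m hm; simp only [mem_Icc] at hm ⊢; omega
  · intro k _; ring
  · intro m _; ring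
  rw [← Ico_add_one_right_eq_Icc, show s - k + 2 = s - k + 1 + 1 by ring,
    Icc_add_one_left_eq_Ioc]

/-- The `t = -1` case of the "messy lemma":
`∑_{k=0}^{ℓ} (∏_{s-ℓ+1 ≤ j ≤ s-k} (d j - d 0)) (∏_{s-k+1 < j ≤ s+1} (d j - d (s-ℓ+1)))
  = ∏_{s-ℓ+1 < j ≤ s+1} (d j - d 0)`. -/
theorem stmt_6 (d : ℤ → ℝ) (s ℓ : ℤ) (hs : 0 ≤ s) (hℓ0 : 0 ≤ ℓ) (hℓs : ℓ ≤ s) :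
    ∑ k ∈ Finset.Icc 0 ℓ,
        (∏ j ∈ Finset.Icc (s - ℓ + 1) (s - k), (d j - d 0)) *
          (∏ j ∈ Finset.Icc (s - k + 2) (s + 1), (d j - d (s - ℓ + 1)))
      = ∏ j ∈ Finset.Icc (s - ℓ + 2) (s + 1), (d j - d 0) :=
  stmt_6_general d s ℓ hℓ0
end

section
/- Let d = (d_0 < d_1 < ... < d_{s+1}) be a strictly increasing sequence of integers and r_i = ∏_{0 ≤ j < k ≤ s+1, j,k ≠ i}(d_k - d_j). Let z = (z_1 > ... > z_s) be integers, and let γ^z be the table with γ^z_{j,t} = ∏_{i=1}^s |t - z_i| for z_j > t > z_{j+1} (conventions z_0 = ∞, z_{s+1} = -∞) and 0 otherwise. If d_i = -z_i for i = 1,...,s (so the middle entries of d are the negated roots), then ∑_{i=0}^{s+1} (-1)^i r_i · (∑_{j=0}^{s} (-1)^j γ^z_{j,-d_i}) = 0. -/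
/-!
At the middle degrees `t = -d i = z i` every entry of column `t` of `γ` vanishes, since its
product contains the factor `|t - z i|`; so only `i = 0` and `i = s + 1` contribute. As `-d 0`
lies above all roots and `-d (s + 1)` below them, each of these two columns has a single nonzero
entry, and the signed column sums are `∏ₖ (d k - d 0)` and `(-1) ^ s ∏ₖ (d (s + 1) - d k)`.
Multiplied by `r 0` and `r (s + 1)`, both become the product of `d l - d k` over all pairs
`k < l` except `(0, s + 1)`, and the signs `1` and `(-1) ^ (s + 1) (-1) ^ s = -1` cancel them.
-/

open Finset

section VandermondePairs

variable {M : Type*} [CommMonoid M] (f : ℤ → ℤ → M) {a b : ℤ}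

theorem prod_pairs_ne_left_mul_prod_Ioo (hab : a < b) :
    (∏ q ∈ (Icc a b ×ˢ Icc a b).filter (fun q => q.1 < q.2 ∧ q.1 ≠ a ∧ q.2 ≠ a), f q.1 q.2) *
        ∏ k ∈ Ioo a b, f a k =
      ∏ q ∈ (Icc a b ×ˢ Icc a b).filter (fun q => q.1 < q.2 ∧ q ≠ (a, b)), f q.1 q.2 := by
  rw [← prod_image (f := fun q => f q.1 q.2) (s := Ioo a b) (g := fun k => (a, k))
    (by simp [Set.InjOn]), ← prod_union]
  · congr 1
    ext ⟨x, y⟩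
    simp only [mem_union, mem_filter, mem_product, mem_Icc, mem_image, mem_Ioo, ne_eq,
      Prod.mk.injEq]
    constructor
    · rintro (h | ⟨k, hk, rfl, rfl⟩) <;> omega
    · intro h
      by_cases hx : x = a
      · exact Or.inr ⟨y, by omega, hx.symm, rfl⟩
      · exact Or.inl (by omega)
  · simp only [disjoint_left, mem_filter, mem_image]
    rintro _ h ⟨k, -, rfl⟩
    exact h.2.2.1 rfl

theorem prod_pairs_ne_right_mul_prod_Ioo (hab : a < b) :
    (∏ q ∈ (Icc a b ×ˢ Icc a b).filter (fun q => q.1 < q.2 ∧ q.1 ≠ b ∧ q.2 ≠ b), f q.1 q.2) *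
        ∏ k ∈ Ioo a b, f k b =
      ∏ q ∈ (Icc a b ×ˢ Icc a b).filter (fun q => q.1 < q.2 ∧ q ≠ (a, b)), f q.1 q.2 := by
  rw [← prod_image (f := fun q => f q.1 q.2) (s := Ioo a b) (g := fun k => (k, b))
    (by simp [Set.InjOn]), ← prod_union]
  · congr 1
    ext ⟨x, y⟩
    simp only [mem_union, mem_filter, mem_product, mem_Icc, mem_image, mem_Ioo, ne_eq,
      Prod.mk.injEq]
    constructor
    · rintro (h | ⟨k, hk, rfl, rfl⟩) <;> omega
    · intro h
      by_cases hy : y = b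
      · exact Or.inr ⟨x, by omega, rfl, hy.symm⟩
      · exact Or.inl (by omega)
  · simp only [disjoint_left, mem_filter, mem_image]
    rintro _ h ⟨k, -, rfl⟩
    exact h.2.2.2 rfl

end VandermondePairs

/-- The conventions `z 0 = ∞` and `z (s + 1) = -∞` are encoded by the disjuncts `j = 0` and
`j = s`. -/
noncomputable def supernaturalTable (s : ℕ) (z : ℤ → ℤ) (j t : ℤ) : ℝ :=
  if (j = 0 ∨ t < z j) ∧ (j = (s : ℤ) ∨ z (j + 1) < t) then
    ∏ i ∈ Icc (1 : ℤ) s, |(t : ℝ) - z i|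
  else 0

noncomputable def supernaturalEulerChar (s : ℕ) (z : ℤ → ℤ) (t : ℤ) : ℝ :=
  ∑ j ∈ Icc (0 : ℤ) s, (-1 : ℝ) ^ j.toNat * supernaturalTable s z j t

section SupernaturalTable

variable {s : ℕ} {z : ℤ → ℤ}

theorem supernaturalEulerChar_root {i : ℤ} (hi : i ∈ Icc (1 : ℤ) s) :
    supernaturalEulerChar s z (z i) = 0 :=
  sum_eq_zero fun j _ => by
    rw [supernaturalTable, prod_eq_zero hi (by simp), ite_self, mul_zero]

theorem supernaturalEulerChar_of_forall_root_lt {t : ℤ} (ht : ∀ k ∈ Icc (1 : ℤ) s, z k < t) :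
    supernaturalEulerChar s z t = ∏ k ∈ Icc (1 : ℤ) s, ((t : ℝ) - z k) := by
  rw [supernaturalEulerChar, sum_eq_single_of_mem 0 (by simp)]
  · rw [supernaturalTable, if_pos, Int.toNat_zero, pow_zero, one_mul]
    · exact prod_congr rfl fun k hk => abs_of_pos (sub_pos.mpr (by exact_mod_cast ht k hk))
    · refine ⟨Or.inl rfl, ?_⟩
      rcases Nat.eq_zero_or_pos s with hs | hs
      · exact Or.inl (by simp [hs])
      · exact Or.inr (ht 1 (by simp; omega))
  · intro j hj hj0
    rw [mem_Icc] at hj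
    rw [supernaturalTable, if_neg, mul_zero]
    rintro ⟨h | h, -⟩
    · exact hj0 h
    · exact (ht j (mem_Icc.mpr ⟨by omega, hj.2⟩)).not_gt h

theorem supernaturalEulerChar_of_forall_lt_root {t : ℤ} (ht : ∀ k ∈ Icc (1 : ℤ) s, t < z k) :
    supernaturalEulerChar s z t = (-1) ^ s * ∏ k ∈ Icc (1 : ℤ) s, ((z k : ℝ) - t) := by
  rw [supernaturalEulerChar, sum_eq_single_of_mem (s : ℤ) (by simp)]
  · rw [supernaturalTable, if_pos, Int.toNat_natCast]
    · refine congrArg _ (prod_congr rfl fun k hk => ?_)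
      rw [abs_sub_comm]
      exact abs_of_pos (sub_pos.mpr (by exact_mod_cast ht k hk))
    · refine ⟨?_, Or.inl rfl⟩
      rcases Nat.eq_zero_or_pos s with hs | hs
      · exact Or.inl (by simp [hs])
      · exact Or.inr (ht s (by simp; omega))
  · intro j hj hjs
    rw [mem_Icc] at hj
    rw [supernaturalTable, if_neg, mul_zero]
    rintro ⟨-, h | h⟩
    · exact hjs h
    · exact (ht (j + 1) (mem_Icc.mpr ⟨by omega, by omega⟩)).not_gt h

end SupernaturalTable

theorem stmt_9_general (s : ℕ) (d z : ℤ → ℤ)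
    (hd : StrictMonoOn d (Set.Icc (0 : ℤ) ((s : ℤ) + 1)))
    (hdz : ∀ i : ℤ, 1 ≤ i → i ≤ (s : ℤ) → d i = -z i)
    (γ : ℤ → ℤ → ℝ)
    (hγ : ∀ j t : ℤ, 0 ≤ j → j ≤ (s : ℤ) →
      γ j t =
        if (j = 0 ∨ t < z j) ∧ (j = (s : ℤ) ∨ z (j + 1) < t) then
          ∏ i ∈ Finset.Icc (1 : ℤ) (s : ℤ), |(t : ℝ) - (z i : ℝ)|
        else 0) :
    ∑ i ∈ Finset.Icc (0 : ℤ) ((s : ℤ) + 1),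
        (-1 : ℝ) ^ i.toNat *
          (∏ q ∈ ((Finset.Icc (0 : ℤ) ((s : ℤ) + 1)) ×ˢ
                (Finset.Icc (0 : ℤ) ((s : ℤ) + 1))).filter
              (fun q => q.1 < q.2 ∧ q.1 ≠ i ∧ q.2 ≠ i),
            ((d q.2 - d q.1 : ℤ) : ℝ)) *
          (∑ j ∈ Finset.Icc (0 : ℤ) (s : ℤ), (-1 : ℝ) ^ j.toNat * γ j (-(d i))) = 0 := by
  have hχ (t : ℤ) : ∑ j ∈ Icc (0 : ℤ) s, (-1 : ℝ) ^ j.toNat * γ j t =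
      supernaturalEulerChar s z t :=
    sum_congr rfl fun j hj => by rw [hγ j t (mem_Icc.1 hj).1 (mem_Icc.1 hj).2]; rfl
  have hz (k : ℤ) (hk : k ∈ Icc (1 : ℤ) s) : z k = -d k := by
    rw [hdz k (mem_Icc.1 hk).1 (mem_Icc.1 hk).2, neg_neg]
  have hlt {a b : ℤ} (ha : 0 ≤ a) (hab : a < b) (hb : b ≤ s + 1) : d a < d b :=
    hd ⟨ha, by omega⟩ ⟨by omega, hb⟩ hab
  have hIoo : Ioo (0 : ℤ) (s + 1) = Icc 1 (s : ℤ) := by ext; simp; omega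
  have hχ₀ : supernaturalEulerChar s z (-d 0) =
      ∏ k ∈ Ioo 0 ((s : ℤ) + 1), ((d k - d 0 : ℤ) : ℝ) := by
    rw [supernaturalEulerChar_of_forall_root_lt, hIoo]
    · refine prod_congr rfl fun k hk => ?_
      rw [hz k hk]
      push_cast
      ring
    · intro k hk
      obtain ⟨hk₁, hk₂⟩ := mem_Icc.1 hk
      rw [hz k hk]
      exact neg_lt_neg (hlt le_rfl (by omega) (by omega))
  have hχₛ : supernaturalEulerChar s z (-d (s + 1)) =
      (-1) ^ s * ∏ k ∈ Ioo 0 ((s : ℤ) + 1), ((d (s + 1) - d k : ℤ) : ℝ) := by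
    rw [supernaturalEulerChar_of_forall_lt_root, hIoo]
    · refine congrArg _ (prod_congr rfl fun k hk => ?_)
      rw [hz k hk]
      push_cast
      ring
    · intro k hk
      obtain ⟨hk₁, hk₂⟩ := mem_Icc.1 hk
      rw [hz k hk]
      exact neg_lt_neg (hlt (by omega) (by omega) le_rfl)
  have hV₀ := prod_pairs_ne_left_mul_prod_Ioo (fun a b => ((d b - d a : ℤ) : ℝ))
    (by omega : (0 : ℤ) < s + 1)
  have hVₛ := prod_pairs_ne_right_mul_prod_Ioo (fun a b => ((d b - d a : ℤ) : ℝ))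
    (by omega : (0 : ℤ) < s + 1)
  simp only [hχ]
  rw [sum_eq_add_of_mem 0 ((s : ℤ) + 1) (by simp only [mem_Icc]; omega)
    (by simp only [mem_Icc]; omega) (by omega)]
  · rw [hχ₀, hχₛ, Int.toNat_zero, show ((s : ℤ) + 1).toNat = s + 1 by omega]
    rw [pow_zero, one_mul, hV₀, mul_mul_mul_comm, ← pow_add, hVₛ, Odd.neg_one_pow ⟨s, by ring⟩]
    ring
  · intro c hc hne
    have hc' : c ∈ Icc (1 : ℤ) s := by simp only [mem_Icc] at hc ⊢; omega
    rw [← hz c hc', supernaturalEulerChar_root hc', mul_zero]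

/-- The interpolation lemma applied to a supernatural table: with a strictly
increasing integer degree sequence `d 0 < … < d (s+1)` whose middle entries are
the negated roots (`d i = -z i` for `1 ≤ i ≤ s`),
`r i = ∏_{0 ≤ j < k ≤ s+1, j,k ≠ i} (d k - d j)`, and `γ` the supernatural table
with root sequence `z`, one has
`∑_{i=0}^{s+1} (-1)^i r i (∑_{j=0}^{s} (-1)^j γ j (-(d i))) = 0`. -/
theorem stmt_9 (s : ℕ) (d z : ℤ → ℤ)
    (hd : StrictMonoOn d (Set.Icc (0 : ℤ) ((s : ℤ) + 1)))
    (hz : ∀ i : ℤ, 1 ≤ i → i < (s : ℤ) → z (i + 1) < z i)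
    (hdz : ∀ i : ℤ, 1 ≤ i → i ≤ (s : ℤ) → d i = -z i)
    (γ : ℤ → ℤ → ℝ)
    (hγ : ∀ j t : ℤ, 0 ≤ j → j ≤ (s : ℤ) →
      γ j t =
        if (j = 0 ∨ t < z j) ∧ (j = (s : ℤ) ∨ z (j + 1) < t) then
          ∏ i ∈ Finset.Icc (1 : ℤ) (s : ℤ), |(t : ℝ) - (z i : ℝ)|
        else 0) :
    ∑ i ∈ Finset.Icc (0 : ℤ) ((s : ℤ) + 1),
        (-1 : ℝ) ^ i.toNat *
          (∏ q ∈ ((Finset.Icc (0 : ℤ) ((s : ℤ) + 1)) ×ˢ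
                (Finset.Icc (0 : ℤ) ((s : ℤ) + 1))).filter
              (fun q => q.1 < q.2 ∧ q.1 ≠ i ∧ q.2 ≠ i),
            ((d q.2 - d q.1 : ℤ) : ℝ)) *
          (∑ j ∈ Finset.Icc (0 : ℤ) (s : ℤ), (-1 : ℝ) ^ j.toNat * γ j (-(d i))) = 0 :=
  stmt_9_general s d z hd hdz γ hγ
end

section
/- Let d_0 < d_1 < ... < d_{s+1} be real numbers and 0 ≤ ℓ ≤ s. Then ∑_{k=0}^{ℓ} (∏_{1≤j≤s-k}(d_j-d_0)) · (∏_{1≤i<j≤s+1, s+1-k<j}(d_j-d_i)) · (∏_{1≤i<j≤s+1-k, i,j≠s+1-ℓ}(d_j-d_i)) = ∏_{0≤i<j≤s+1, i,j ≠ s+1-ℓ}(d_j-d_i). -/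
open Finset

/-!
Write `m = s + 1 - ℓ` and `n = s + 1 - k`. Splitting off the row `i = m` of the second factor and
merging the rest with the third factor turns the `k`-th summand into
`P ⬝ ∏_{1≤j<m} (d j - d 0) ⬝ (∏_{m≤j<n} (d j - d 0)) ⬝ (∏_{n<j≤s+1} (d j - d m))`,
with `P = ∏_{1≤i<j≤s+1, i,j≠m} (d j - d i)`. Since `(d j - d 0) - (d j - d m) = d m - d 0` does not
depend on `j`, the sum of the last two factors over `m ≤ n ≤ s + 1` telescopes to
`∏_{m<j≤s+1} (d j - d 0)`; what remains is the row `i = 0` of the right-hand side, times `P`.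
-/

theorem sum_prod_Ico_mul_prod_Ioc_eq_prod_Ioc {R : Type*} [CommSemiring R] (a b : ℤ → R)
    {m N : ℤ} (hmN : m ≤ N) (hab : ∀ n ∈ Ioc m N, a n = a m + b n) :
    ∑ n ∈ Icc m N, (∏ j ∈ Ico m n, a j) * ∏ j ∈ Ioc n N, b j = ∏ j ∈ Ioc m N, a j := by
  induction N, hmN using Int.leInduction with
  | base => simp
  | succ N hmN ih =>
    have hpush : ∀ n ∈ Icc m N, (∏ j ∈ Ico m n, a j) * ∏ j ∈ Ioc n (N + 1), b j
        = b (N + 1) * ((∏ j ∈ Ico m n, a j) * ∏ j ∈ Ioc n N, b j) := fun n hn => by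
      rw [← insert_Ioc_right_eq_Ioc_add_one (mem_Icc.1 hn).2, prod_insert (by simp)]
      ring
    rw [← insert_Icc_right_eq_Icc_add_one (by omega), sum_insert (by simp), sum_congr rfl hpush,
      ← mul_sum, ih fun n hn => hab n (by simp at hn ⊢; omega), Ioc_self, prod_empty, mul_one,
      Ico_add_one_right_eq_Icc, Icc_eq_cons_Ioc hmN, prod_cons,
      ← insert_Ioc_right_eq_Ioc_add_one hmN, prod_insert (by simp),
      hab (N + 1) (by simp; omega)]
    ring

section Pairs

variable {M : Type*} [CommMonoid M] (g : ℤ → ℤ → M)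

theorem prod_pairs_above_mul_prod_pairs_avoiding {m n N : ℤ} (hm : 1 ≤ m) (hmn : m ≤ n)
    (hnN : n ≤ N) :
    (∏ q ∈ (Icc 1 N ×ˢ Icc 1 N).filter (fun q => q.1 < q.2 ∧ n < q.2), g q.1 q.2) *
        ∏ q ∈ (Icc 1 n ×ˢ Icc 1 n).filter (fun q => q.1 < q.2 ∧ q.1 ≠ m ∧ q.2 ≠ m), g q.1 q.2
      = (∏ q ∈ (Icc 1 N ×ˢ Icc 1 N).filter (fun q => q.1 < q.2 ∧ q.1 ≠ m ∧ q.2 ≠ m),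
          g q.1 q.2) * ∏ j ∈ Ioc n N, g m j := by
  rw [← prod_singleton (fun i => ∏ j ∈ Ioc n N, g i j) m, ← prod_product' _ _ (fun i j => g i j),
    ← prod_union, ← prod_union]
  · congr 1
    ext ⟨i, j⟩
    simp only [mem_union, mem_filter, mem_product, mem_Icc, mem_Ioc, mem_singleton]
    omega
  all_goals
    rw [disjoint_left]
    rintro ⟨i, j⟩
    simp only [mem_filter, mem_product, mem_Icc, mem_Ioc, mem_singleton]
    omega

theorem prod_pairs_avoiding_eq_prod_row_zero_mul {m N : ℤ} (hm : 1 ≤ m) (hmN : m ≤ N + 1) :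
    ∏ q ∈ (Icc 0 N ×ˢ Icc 0 N).filter (fun q => q.1 < q.2 ∧ q.1 ≠ m ∧ q.2 ≠ m), g q.1 q.2
      = (∏ j ∈ Ico 1 m, g 0 j) * (∏ j ∈ Ioc m N, g 0 j) *
          ∏ q ∈ (Icc 1 N ×ˢ Icc 1 N).filter (fun q => q.1 < q.2 ∧ q.1 ≠ m ∧ q.2 ≠ m),
            g q.1 q.2 := by
  rw [← prod_union (disjoint_left.2 fun j h₁ h₂ => by simp only [mem_Ico, mem_Ioc] at h₁ h₂; omega),
    ← prod_singleton (fun i => ∏ j ∈ Ico 1 m ∪ Ioc m N, g i j) 0,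
    ← prod_product' _ _ (fun i j => g i j), ← prod_union]
  · congr 1
    ext ⟨i, j⟩
    simp only [mem_union, mem_filter, mem_product, mem_Icc, mem_Ico, mem_Ioc, mem_singleton]
    omega
  · rw [disjoint_left]
    rintro ⟨i, j⟩
    simp only [mem_union, mem_filter, mem_product, mem_Icc, mem_Ico, mem_Ioc, mem_singleton]
    omega

end Pairs

theorem sum_Icc_prod_pairs_eq_prod_pairs_avoiding {R : Type*} [CommSemiring R] (g : ℤ → ℤ → R)
    {m N : ℤ} (hm : 1 ≤ m) (hmN : m ≤ N) (hg : ∀ j ∈ Ioc m N, g 0 j = g 0 m + g m j) :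
    ∑ n ∈ Icc m N, (∏ j ∈ Ico 1 n, g 0 j) *
        (∏ q ∈ (Icc 1 N ×ˢ Icc 1 N).filter (fun q => q.1 < q.2 ∧ n < q.2), g q.1 q.2) *
        ∏ q ∈ (Icc 1 n ×ˢ Icc 1 n).filter (fun q => q.1 < q.2 ∧ q.1 ≠ m ∧ q.2 ≠ m), g q.1 q.2
      = ∏ q ∈ (Icc 0 N ×ˢ Icc 0 N).filter (fun q => q.1 < q.2 ∧ q.1 ≠ m ∧ q.2 ≠ m),
          g q.1 q.2 := by
  set P := ∏ q ∈ (Icc 1 N ×ˢ Icc 1 N).filter (fun q => q.1 < q.2 ∧ q.1 ≠ m ∧ q.2 ≠ m), g q.1 q.2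
  have hsummand : ∀ n ∈ Icc m N,
      (∏ j ∈ Ico 1 n, g 0 j) *
          (∏ q ∈ (Icc 1 N ×ˢ Icc 1 N).filter (fun q => q.1 < q.2 ∧ n < q.2), g q.1 q.2) *
          ∏ q ∈ (Icc 1 n ×ˢ Icc 1 n).filter (fun q => q.1 < q.2 ∧ q.1 ≠ m ∧ q.2 ≠ m), g q.1 q.2
        = (P * ∏ j ∈ Ico 1 m, g 0 j) * ((∏ j ∈ Ico m n, g 0 j) * ∏ j ∈ Ioc n N, g m j) := by
    intro n hn
    rw [mem_Icc] at hn
    rw [mul_assoc, prod_pairs_above_mul_prod_pairs_avoiding g hm hn.1 hn.2,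
      ← Ico_union_Ico_eq_Ico hm hn.1, prod_union (Ico_disjoint_Ico_consecutive _ _ _)]
    ring
  rw [sum_congr rfl hsummand, ← mul_sum, sum_prod_Ico_mul_prod_Ioc_eq_prod_Ioc _ _ hmN hg,
    prod_pairs_avoiding_eq_prod_row_zero_mul g hm (by omega)]
  ring

theorem stmt_11_general (s : ℤ) (d : ℤ → ℝ)
    (ℓ : ℤ) (hℓ0 : 0 ≤ ℓ) (hℓ : ℓ ≤ s) :
    ∑ k ∈ Finset.Icc (0 : ℤ) ℓ,
        (∏ j ∈ Finset.Icc (1 : ℤ) (s - k), (d j - d 0)) *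
          (∏ q ∈ ((Finset.Icc (1 : ℤ) (s + 1)) ×ˢ (Finset.Icc (1 : ℤ) (s + 1))).filter
              (fun q => q.1 < q.2 ∧ s + 1 - k < q.2),
            (d q.2 - d q.1)) *
          (∏ q ∈ ((Finset.Icc (1 : ℤ) (s + 1 - k)) ×ˢ (Finset.Icc (1 : ℤ) (s + 1 - k))).filter
              (fun q => q.1 < q.2 ∧ q.1 ≠ s + 1 - ℓ ∧ q.2 ≠ s + 1 - ℓ),
            (d q.2 - d q.1))
      = ∏ q ∈ ((Finset.Icc (0 : ℤ) (s + 1)) ×ˢ (Finset.Icc (0 : ℤ) (s + 1))).filter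
            (fun q => q.1 < q.2 ∧ q.1 ≠ s + 1 - ℓ ∧ q.2 ≠ s + 1 - ℓ),
          (d q.2 - d q.1) := by
  rw [← sum_Icc_prod_pairs_eq_prod_pairs_avoiding (fun i j => d j - d i) (by omega) (by omega)
    fun j _ => by ring]
  refine sum_nbij' (fun k => s + 1 - k) (fun n => s + 1 - n) (by intro k; simp; omega)
    (by intro n; simp; omega) (by simp) (by simp) fun k _ => ?_
  rw [show Icc 1 (s - k) = Ico 1 (s + 1 - k) by ext; simp; omega]

/-- The central computation in the proof of the Positivity Theorem of
Eisenbud–Schreyer: for `d 0 < … < d (s+1)` real and `0 ≤ ℓ ≤ s`,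
`∑_{k=0}^{ℓ} (∏_{1≤j≤s-k}(d j - d 0)) ⬝ (∏_{1≤i<j≤s+1, s+1-k<j}(d j - d i)) ⬝
 (∏_{1≤i<j≤s+1-k, i,j≠s+1-ℓ}(d j - d i)) = ∏_{0≤i<j≤s+1, i,j≠s+1-ℓ}(d j - d i)`. -/
theorem stmt_11 (s : ℤ) (hs : 0 ≤ s) (d : ℤ → ℝ)
    (hd : StrictMonoOn d (Set.Icc (0 : ℤ) (s + 1)))
    (ℓ : ℤ) (hℓ0 : 0 ≤ ℓ) (hℓ : ℓ ≤ s) :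
    ∑ k ∈ Finset.Icc (0 : ℤ) ℓ,
        (∏ j ∈ Finset.Icc (1 : ℤ) (s - k), (d j - d 0)) *
          (∏ q ∈ ((Finset.Icc (1 : ℤ) (s + 1)) ×ˢ (Finset.Icc (1 : ℤ) (s + 1))).filter
              (fun q => q.1 < q.2 ∧ s + 1 - k < q.2),
            (d q.2 - d q.1)) *
          (∏ q ∈ ((Finset.Icc (1 : ℤ) (s + 1 - k)) ×ˢ (Finset.Icc (1 : ℤ) (s + 1 - k))).filter
              (fun q => q.1 < q.2 ∧ q.1 ≠ s + 1 - ℓ ∧ q.2 ≠ s + 1 - ℓ),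
            (d q.2 - d q.1))
      = ∏ q ∈ ((Finset.Icc (0 : ℤ) (s + 1)) ×ˢ (Finset.Icc (0 : ℤ) (s + 1))).filter
            (fun q => q.1 < q.2 ∧ q.1 ≠ s + 1 - ℓ ∧ q.2 ≠ s + 1 - ℓ),
          (d q.2 - d q.1) :=
  stmt_11_general s d ℓ hℓ0 hℓ
end

section
/- For d = (d_0,...,d_{s+1}) a strictly increasing integer sequence, define the pure Betti table β^d by β^d_{i,j} = r_i(d) = ∏_{0≤j'<k≤s+1, j',k≠i}(d_k - d_{j'}) if j = d_i and 0 otherwise. For 0 ≤ τ and c ∈ Z, define the pairing ⟨β, γ⟩_{c,τ} = ∑_{i,j,k: j ≤ i, (j < τ or j ≤ i-2)} (-1)^{i-j} β_{i,k} γ_{j,-k} + ∑_{i,j,k,ε: 0≤ε≤1, j=τ, i=j+ε, k ≤ c+ε} (-1)^{i-j} β_{i,k} γ_{j,-k}. Then: if τ ≥ 1 and c < d_τ, ⟨β^d, γ⟩_{c,τ} = L(d, φ^τ)(γ), and if c ≥ d_{τ+1}, ⟨β^d, γ⟩_{c,τ} = L(d, φ^{τ+1})(γ), where L(d,ψ)(γ)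 = ∑_{i=0}^{s+1} (-1)^i r_i(d) ∑_{j=0}^{ψ_i} (-1)^j γ_{j,d_i} and φ^j(s) = (0,...,j-2, j-1, j-1, j-1, j,...,s-1). -/
open Finset

/-- Herzog–Kühl number `r i = ∏_{0 ≤ j < k ≤ s+1, j,k ≠ i} (d k - d j)` (as a real number). -/
noncomputable def HK (s : ℤ) (d : ℤ → ℤ) (i : ℤ) : ℝ :=
  ∏ q ∈ ((Finset.Icc (0 : ℤ) (s + 1)) ×ˢ (Finset.Icc (0 : ℤ) (s + 1))).filter
      (fun q => q.1 < q.2 ∧ q.1 ≠ i ∧ q.2 ≠ i),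
    ((d q.2 - d q.1 : ℤ) : ℝ)

/-- The functional `L(d, ψ)(γ) = ∑_{i=0}^{s+1} (-1)^i r_i(d) ∑_{j=0}^{ψ i} (-1)^j γ_{j,-d_i}`. -/
noncomputable def Lform (s : ℤ) (d : ℤ → ℤ) (ψ : ℤ → ℤ) (γ : ℤ → ℤ → ℝ) : ℝ :=
  ∑ i ∈ Finset.Icc (0 : ℤ) (s + 1),
    (-1 : ℝ) ^ i.toNat * HK s d i *
      ∑ j ∈ Finset.Icc (0 : ℤ) (ψ i), (-1 : ℝ) ^ j.toNat * γ j (-(d i))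

/-- The bound sequence `φ^j(s) = (0, …, j-2, j-1, j-1, j-1, j, …, s-1)`:
`φ j i = i` if `i < j`, `i - 1` if `i = j`, and `i - 2` if `i > j`. -/
def phiES (j : ℤ) : ℤ → ℤ := fun i => if i < j then i else if i = j then i - 1 else i - 2

/-- The Boij–Söderberg pairing `⟨β^d, γ⟩_{c,τ}` of the pure Betti table
`β^d_{i,k} = r_i(d)` for `k = d_i`, `0 ≤ i ≤ s+1` (and `0` otherwise) against a
table `γ`:  the first sum runs over `j ≤ i` with (`j < τ` or `j ≤ i-2`), the
second over `j = τ`, `i = τ + ε`, `ε ∈ {0,1}`, `k ≤ c + ε`. -/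
noncomputable def pairingES (s : ℤ) (d : ℤ → ℤ) (γ : ℤ → ℤ → ℝ) (c τ : ℤ) : ℝ :=
  (∑ i ∈ Finset.Icc (0 : ℤ) (s + 1),
      ∑ j ∈ (Finset.Icc (0 : ℤ) i).filter (fun j => j < τ ∨ j ≤ i - 2),
        (-1 : ℝ) ^ (i - j).toNat * HK s d i * γ j (-(d i)))
    + ∑ ε ∈ Finset.Icc (0 : ℤ) 1,
        (if τ + ε ≤ s + 1 ∧ d (τ + ε) ≤ c + ε then
            (-1 : ℝ) ^ ε.toNat * HK s d (τ + ε) * γ τ (-(d (τ + ε)))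
          else 0)

/-!
Since `(-1)^(i-j) = (-1)^i (-1)^j` for `0 ≤ j ≤ i`, the first sum of the pairing is exactly
`L(d, φ^τ)(γ)`. The bounds `φ^τ` and `φ^{τ+1}` differ only at `i = τ` and `i = τ + 1`, where
each rises from `τ - 1` to `τ`, so `L(d, φ^{τ+1}) - L(d, φ^τ) = r_τ γ_{τ,-d_τ} - r_{τ+1} γ_{τ,-d_{τ+1}}`:
these are the two `ε`-terms of the pairing, and as `d` is strictly increasing the bound on `c`
decides whether both or neither of them occur.
-/
lemma Icc_filter_eq_Icc_phiES (τ i : ℤ) :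
    (Icc (0 : ℤ) i).filter (fun j => j < τ ∨ j ≤ i - 2) = Icc 0 (phiES τ i) := by
  ext j
  simp only [mem_filter, mem_Icc, phiES]
  split_ifs <;> omega

lemma phiES_le (τ i : ℤ) : phiES τ i ≤ i := by
  unfold phiES; split_ifs <;> omega

lemma phiES_self (τ : ℤ) : phiES τ τ = τ - 1 := by simp [phiES]

lemma phiES_add_one_left_self (τ : ℤ) : phiES (τ + 1) τ = τ := by simp [phiES]

lemma phiES_add_one_right (τ : ℤ) : phiES τ (τ + 1) = τ - 1 := by
  simp only [phiES]; split_ifs <;> omega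

lemma phiES_add_one_of_ne {τ i : ℤ} (h₁ : i ≠ τ) (h₂ : i ≠ τ + 1) :
    phiES (τ + 1) i = phiES τ i := by
  simp only [phiES]; split_ifs <;> omega

lemma neg_one_pow_toNat_sub {i j : ℤ} (hj : 0 ≤ j) (hji : j ≤ i) :
    (-1 : ℝ) ^ (i - j).toNat = (-1) ^ i.toNat * (-1) ^ j.toNat := by
  rw [show i.toNat = (i - j).toNat + j.toNat by omega, pow_add, mul_assoc, ← pow_add,
    Even.neg_one_pow ⟨_, rfl⟩, mul_one]

lemma pairingES_eq_Lform_add (s : ℤ) (d : ℤ → ℤ) (γ : ℤ → ℤ → ℝ) (c τ : ℤ) :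
    pairingES s d γ c τ = Lform s d (phiES τ) γ
      + (if τ ≤ s + 1 ∧ d τ ≤ c then HK s d τ * γ τ (-(d τ)) else 0)
      - (if τ + 1 ≤ s + 1 ∧ d (τ + 1) ≤ c + 1 then HK s d (τ + 1) * γ τ (-(d (τ + 1)))
          else 0) := by
  have hbetti : (∑ i ∈ Icc (0 : ℤ) (s + 1),
      ∑ j ∈ (Icc (0 : ℤ) i).filter (fun j => j < τ ∨ j ≤ i - 2),
        (-1 : ℝ) ^ (i - j).toNat * HK s d i * γ j (-(d i))) = Lform s d (phiES τ) γ := by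
    refine sum_congr rfl fun i _ => ?_
    rw [Icc_filter_eq_Icc_phiES, mul_sum]
    refine sum_congr rfl fun j hj => ?_
    rw [mem_Icc] at hj
    rw [neg_one_pow_toNat_sub hj.1 (hj.2.trans (phiES_le τ i))]
    ring
  rw [pairingES, hbetti, show Icc (0 : ℤ) 1 = {0, 1} by decide, sum_pair zero_ne_one]
  simp only [add_zero, Int.toNat_zero, Int.toNat_one, pow_zero, pow_one, one_mul, neg_one_mul]
  split_ifs <;> ring

noncomputable def altPartialSum (γ : ℤ → ℤ → ℝ) (t n : ℤ) : ℝ :=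
  ∑ j ∈ Icc (0 : ℤ) n, (-1 : ℝ) ^ j.toNat * γ j t

lemma altPartialSum_eq_sub_one_add (γ : ℤ → ℤ → ℝ) (t : ℤ) {n : ℤ} (hn : 0 ≤ n) :
    altPartialSum γ t n = altPartialSum γ t (n - 1) + (-1) ^ n.toNat * γ n t := by
  rw [altPartialSum, altPartialSum, ← insert_Icc_sub_one_right_eq_Icc hn, sum_insert (by simp),
    add_comm]

lemma Lform_eq_sum_altPartialSum (s : ℤ) (d ψ : ℤ → ℤ) (γ : ℤ → ℤ → ℝ) :
    Lform s d ψ γ = ∑ i ∈ Icc (0 : ℤ) (s + 1),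
      (-1 : ℝ) ^ i.toNat * HK s d i * altPartialSum γ (-(d i)) (ψ i) :=
  rfl

lemma Lform_phiES_add_one (s : ℤ) (d : ℤ → ℤ) (γ : ℤ → ℤ → ℝ) {τ : ℤ} (hτ0 : 0 ≤ τ)
    (hτs : τ ≤ s) :
    Lform s d (phiES (τ + 1)) γ = Lform s d (phiES τ) γ
      + HK s d τ * γ τ (-(d τ)) - HK s d (τ + 1) * γ τ (-(d (τ + 1))) := by
  have hsq : (-1 : ℝ) ^ τ.toNat * (-1) ^ τ.toNat = 1 := by
    rw [← pow_add, Even.neg_one_pow ⟨_, rfl⟩]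
  have hsucc : (τ + 1).toNat = τ.toNat + 1 := by omega
  have hterm : ∀ i, (-1 : ℝ) ^ i.toNat * HK s d i * altPartialSum γ (-(d i)) (phiES (τ + 1) i)
      = (-1) ^ i.toNat * HK s d i * altPartialSum γ (-(d i)) (phiES τ i)
        + (if i = τ then HK s d τ * γ τ (-(d τ)) else 0)
        - (if i = τ + 1 then HK s d (τ + 1) * γ τ (-(d (τ + 1))) else 0) := by
    intro i
    by_cases h₁ : i = τ
    · subst h₁
      rw [phiES_add_one_left_self, phiES_self, altPartialSum_eq_sub_one_add γ _ hτ0, if_pos rfl,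
        if_neg (by omega)]
      linear_combination HK s d i * γ i (-(d i)) * hsq
    by_cases h₂ : i = τ + 1
    · subst h₂
      rw [phiES_self, add_sub_cancel_right, phiES_add_one_right,
        altPartialSum_eq_sub_one_add γ _ hτ0, if_neg h₁, if_pos rfl, hsucc, pow_succ]
      linear_combination -HK s d (τ + 1) * γ τ (-(d (τ + 1))) * hsq
    · rw [phiES_add_one_of_ne h₁ h₂, if_neg h₁, if_neg h₂]
      ring
  rw [Lform_eq_sum_altPartialSum, Lform_eq_sum_altPartialSum, sum_congr rfl fun i _ => hterm i,
    sum_sub_distrib, sum_add_distrib, sum_ite_eq', sum_ite_eq', if_pos (by rw [mem_Icc]; omega),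
    if_pos (by rw [mem_Icc]; omega)]

theorem stmt_18_general (s : ℤ) (d : ℤ → ℤ)
    (hd : StrictMonoOn d (Set.Icc (0 : ℤ) (s + 1)))
    (γ : ℤ → ℤ → ℝ)
    (τ c : ℤ) (hτ0 : 0 ≤ τ) (hτs : τ ≤ s) :
    (1 ≤ τ → c < d τ → pairingES s d γ c τ = Lform s d (phiES τ) γ) ∧
      (d (τ + 1) ≤ c → pairingES s d γ c τ = Lform s d (phiES (τ + 1)) γ) := by
  have hdτ : d τ < d (τ + 1) :=
    hd ⟨hτ0, by omega⟩ ⟨by omega, by omega⟩ (lt_add_one τ)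
  refine ⟨fun _ hc => ?_, fun hc => ?_⟩
  · rw [pairingES_eq_Lform_add, if_neg (by omega), if_neg (by omega)]
    ring
  · rw [pairingES_eq_Lform_add, if_pos (by omega), if_pos (by omega),
      Lform_phiES_add_one s d γ hτ0 hτs]

/-- Identification of the Boij–Söderberg pairing against a pure Betti table with the
linear functionals `L(d, φ^τ)` resp. `L(d, φ^{τ+1})`: if `τ ≥ 1` and `c < d τ` then
`⟨β^d, γ⟩_{c,τ} = L(d, φ^τ)(γ)`, and if `c ≥ d (τ+1)` then
`⟨β^d, γ⟩_{c,τ} = L(d, φ^{τ+1})(γ)`. -/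
theorem stmt_18 (s : ℤ) (hs : 0 ≤ s) (d : ℤ → ℤ)
    (hd : StrictMonoOn d (Set.Icc (0 : ℤ) (s + 1)))
    (γ : ℤ → ℤ → ℝ) (hγ : ∀ j t : ℤ, j < 0 → γ j t = 0)
    (τ c : ℤ) (hτ0 : 0 ≤ τ) (hτs : τ ≤ s) :
    (1 ≤ τ → c < d τ → pairingES s d γ c τ = Lform s d (phiES τ) γ) ∧
      (d (τ + 1) ≤ c → pairingES s d γ c τ = Lform s d (phiES (τ + 1)) γ) :=
  stmt_18_general s d hd γ τ c hτ0 hτs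
end
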